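/- The eta-expansion transformation [[M]]^{τ⇒τ'} is type-preserving: if τ and τ' are location-annotated function types that become identical upon erasing all location annotations, and Γ ⊢_a M : τ, then Γ ⊢_a [[M]]^{τ⇒τ'} : τ'. The transformation is defined by [[M]]^{τ⇒τ} = M, and [[M]]^{τ₁→^a τ₂ ⇒ τ₃→^b τ₄} = λ^b x.[[ M [[x]]^{τ₃⇒τ₁} ]]^{τ₂⇒τ₄}. -/

import Mathlib

/-! Locations of the RPC calculus: client and server. -/
inductive Loc | c | s
deriving DecidableEq, Repr

/-! Types: base and location-annotated function types τ →^a τ'. -/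
inductive Ty | base | arr (t : Ty) (a : Loc) (t' : Ty)
deriving DecidableEq, Repr

/-! Terms of λ_rpc in de Bruijn representation. -/
inductive Tm
| var (n : Nat)
| lam (a : Loc) (body : Tm)
| app (l m : Tm)
deriving DecidableEq, Repr

/-- Values are variables and λ-abstractions. -/
def IsValue : Tm → Prop
| .var _ => True
| .lam _ _ => True
| .app _ _ => False

/-- de Bruijn lifting. -/
def lift (d : Nat) : Tm → Tm
| .var n => .var (if n < d then n else n + 1)
| .lam a m => .lam a (lift (d + 1) m)
| .app l m => .app (lift d l) (lift d m)

/-- Capture-avoiding substitution of `w` for de Bruijn index `k`. -/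
def subst (k : Nat) (w : Tm) : Tm → Tm
| .var n => if n = k then w else .var (if n < k then n else n - 1)
| .lam a m => .lam a (subst (k + 1) (lift 0 w) m)
| .app l m => .app (subst k w l) (subst k w m)

/-- Big-step semantics M ⇓_a V of λ_rpc. -/
inductive Eval : Loc → Tm → Tm → Prop
| value {a V} : IsValue V → Eval a V V
| beta {a b L M N W V} : Eval a L (.lam b N) → Eval a M W →
    Eval b (subst 0 W N) V → Eval a (.app L M) V

/-- The locative type system Γ ⊢_a M : τ. -/
inductive Typing : List Ty → Loc → Tm → Ty → Prop
| var {Γ a n τ} : Γ[n]? = some τ → Typing Γ a (.var n) τ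
| lam {Γ a b M τ τ'} : Typing (τ :: Γ) b M τ' →
    Typing Γ a (.lam b M) (.arr τ b τ')
| app {Γ a L M τ τ'} : Typing Γ a L (.arr τ a τ') → Typing Γ a M τ →
    Typing Γ a (.app L M) τ'
| req {Γ L M τ τ'} : Typing Γ .c L (.arr τ .s τ') → Typing Γ .c M τ →
    Typing Γ .c (.app L M) τ'
| call {Γ L M τ τ'} : Typing Γ .s L (.arr τ .c τ') → Typing Γ .s M τ →
    Typing Γ .s (.app L M) τ'

/-! Location-erased types and type erasure. -/
inductive ETy | base | arr (t t' : ETy)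
deriving DecidableEq, Repr

def erase : Ty → ETy
| .base => .base
| .arr t _ t' => .arr (erase t) (erase t')

/-- The eta-expansion transformation [[M]]^{τ⇒τ'}:
[[M]]^{τ⇒τ} = M and
[[M]]^{τ₁→^a τ₂ ⇒ τ₃→^b τ₄} = λ^b x.[[ M [[x]]^{τ₃⇒τ₁} ]]^{τ₂⇒τ₄}. -/
def eta : Ty → Ty → Tm → Tm
| τ, τ', M =>
  if τ = τ' then M
  else
    match τ, τ' with
    | .arr t1 _ t2, .arr t3 b t4 =>
        .lam b (eta t2 t4 (.app (lift 0 M) (eta t3 t1 (.var 0))))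
    | _, _ => M
termination_by τ τ' _ => sizeOf τ + sizeOf τ'
decreasing_by all_goals (simp_wf; omega)

/-! Since (T-App), (T-Req) and (T-Call) together type an application at every combination of
current location and arrow annotation, a typing derivation can be moved to any location. So the
weakened term `M` can be applied at the location `b` of the new abstraction `λ^b x`, and the two
recursive conversions are typed by induction on the common erasure of source and target. -/

namespace Typing

theorem app_of_arr {Γ : List Ty} {a b : Loc} {L M : Tm} {τ τ' : Ty}
    (hL : Typing Γ a L (.arr τ b τ')) (hM : Typing Γ a M τ) :
    Typing Γ a (.app L M) τ' := by
  cases a <;> cases b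
  · exact app hL hM
  · exact req hL hM
  · exact call hL hM
  · exact app hL hM

theorem change_loc {Γ : List Ty} {a : Loc} {M : Tm} {τ : Ty} (h : Typing Γ a M τ) (b : Loc) :
    Typing Γ b M τ := by
  induction h generalizing b with
  | var h => exact var h
  | lam _ ih => exact lam (ih _)
  | app _ _ ihL ihM | req _ _ ihL ihM | call _ _ ihL ihM => exact app_of_arr (ihL b) (ihM b)

theorem weaken {Γ₁ Γ₂ : List Ty} {a : Loc} {M : Tm} {τ : Ty} (σ : Ty)
    (h : Typing (Γ₁ ++ Γ₂) a M τ) : Typing (Γ₁ ++ σ :: Γ₂) a (lift Γ₁.length M) τ := by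
  generalize hΓ : Γ₁ ++ Γ₂ = Γ at h
  induction h generalizing Γ₁ with
  | @var Γ a n τ h =>
    subst hΓ
    refine var ?_
    split_ifs with hn
    · rwa [List.getElem?_append_left hn] at h ⊢
    · rw [List.getElem?_append_right (by omega)] at h ⊢
      rwa [show n + 1 - Γ₁.length = n - Γ₁.length + 1 by omega]
  | @lam Γ a b M τ τ' _ ih => exact lam (ih (Γ₁ := τ :: Γ₁) (by rw [← hΓ]; rfl))
  | app _ _ ihL ihM => exact app (ihL hΓ) (ihM hΓ)
  | req _ _ ihL ihM => exact req (ihL hΓ) (ihM hΓ)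
  | call _ _ ihL ihM => exact call (ihL hΓ) (ihM hΓ)

end Typing

theorem eta_self (τ : Ty) (M : Tm) : eta τ τ M = M := by
  rw [eta.eq_def]; simp

theorem eta_arr_of_ne {t1 t2 t3 t4 : Ty} {la lb : Loc} (M : Tm)
    (h : Ty.arr t1 la t2 ≠ Ty.arr t3 lb t4) :
    eta (.arr t1 la t2) (.arr t3 lb t4) M =
      .lam lb (eta t2 t4 (.app (lift 0 M) (eta t3 t1 (.var 0)))) := by
  rw [eta, if_neg h]

/-- Induction on the common erasure of `τ` and `τ'`: the recursive call `eta t3 t1` swaps the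
roles of source and target, so neither type alone decreases along the recursion. -/
theorem Typing.eta {τ τ' : Ty} (herase : erase τ = erase τ') {Γ : List Ty} {a : Loc} {M : Tm}
    (h : Typing Γ a M τ) : Typing Γ a (eta τ τ' M) τ' := by
  generalize hE : erase τ' = E at herase
  induction E generalizing τ τ' Γ a M with
  | base =>
    cases τ <;> cases τ' <;> simp only [erase, reduceCtorEq] at herase hE
    rwa [eta_self]
  | arr E₁ E₂ ih₁ ih₂ =>
    obtain ⟨⟩ | ⟨t1, la, t2⟩ := τ <;> obtain ⟨⟩ | ⟨t3, lb, t4⟩ := τ' <;>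
      simp only [erase, reduceCtorEq, ETy.arr.injEq] at herase hE
    by_cases heq : Ty.arr t1 la t2 = Ty.arr t3 lb t4
    · rwa [heq, eta_self, ← heq]
    rw [eta_arr_of_ne M heq]
    have hx : Typing (t3 :: Γ) lb (.var 0) t3 := var rfl
    have hM : Typing (t3 :: Γ) lb (lift 0 M) (.arr t1 la t2) :=
      (Typing.weaken (Γ₁ := []) t3 h).change_loc lb
    exact lam (ih₂ (app_of_arr hM (ih₁ hx herase.1 hE.1)) hE.2 herase.2)

/-- The eta-expansion transformation is type-preserving: if τ and τ' are
location-annotated function types with the same erasure and Γ ⊢_a M : τ,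
then Γ ⊢_a [[M]]^{τ⇒τ'} : τ'. -/
theorem rpc_eta_transformation_type_preserving {Γ : List Ty} {a : Loc}
    {M : Tm} (t1 t2 t3 t4 : Ty) (la lb : Loc)
    (herase : erase (.arr t1 la t2) = erase (.arr t3 lb t4))
    (hty : Typing Γ a M (.arr t1 la t2)) :
    Typing Γ a (eta (.arr t1 la t2) (.arr t3 lb t4) M) (.arr t3 lb t4) :=
  hty.eta herase
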